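/- arXiv:2506.19405 — 2 statements merged into one kernel-verified Lean document; each statement's English description precedes it below -/
import Mathlib

section
/- Let β be a bilinear map ℝ^e × ℝ^f → ℝ^g given by an HM representation (L, R, P), i.e., β(u,v) = Σ_{i=1}^r P_{·,i} · (L_{i,·} · u)(R_{i,·} · v). Then for any choice of norms ‖·‖_p (on the output) and ‖·‖_q (on the inputs), with γ := ‖(Σ_{i=1}^r ‖L_{i,·}‖_q* ‖R_{i,·}‖_q* |p_{j,i}|)_j‖_p, one has ‖β(u,v)‖_p ≤ γ · ‖u‖_q · ‖v‖_q for all u ∈ ℝ^e, v ∈ ℝ^f. -/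
/-- Type synonym for `Fin k → ℝ` to carry a custom norm. -/
structure SynVec (k : ℕ) where
  val : Fin k → ℝ

namespace SynVec

variable {k : ℕ}

theorem val_injective : Function.Injective (val (k := k)) := by
  rintro ⟨a⟩ ⟨b⟩ h; cases h; rfl

instance : Zero (SynVec k) := ⟨⟨0⟩⟩
instance : Add (SynVec k) := ⟨fun a b => ⟨a.val + b.val⟩⟩
instance : Neg (SynVec k) := ⟨fun a => ⟨-a.val⟩⟩
instance : Sub (SynVec k) := ⟨fun a b => ⟨a.val - b.val⟩⟩
instance : SMul ℕ (SynVec k) := ⟨fun n a => ⟨n • a.val⟩⟩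
instance : SMul ℤ (SynVec k) := ⟨fun n a => ⟨n • a.val⟩⟩
instance : SMul ℝ (SynVec k) := ⟨fun c a => ⟨c • a.val⟩⟩

instance : AddCommGroup (SynVec k) :=
  val_injective.addCommGroup val rfl (fun _ _ => rfl) (fun _ => rfl) (fun _ _ => rfl)
    (fun _ _ => rfl) (fun _ _ => rfl)

instance : Module ℝ (SynVec k) :=
  val_injective.module ℝ { toFun := val, map_zero' := rfl, map_add' := fun _ _ => rfl }
    (fun _ _ => rfl)

/-- `val` as a linear equivalence. -/
noncomputable def valₗ : SynVec k ≃ₗ[ℝ] (Fin k → ℝ) :=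
  { toFun := val
    invFun := mk
    left_inv := fun _ => rfl
    right_inv := fun _ => rfl
    map_add' := fun _ _ => rfl
    map_smul' := fun _ _ => rfl }

instance : FiniteDimensional ℝ (SynVec k) :=
  LinearEquiv.finiteDimensional (valₗ (k := k)).symm

end SynVec

theorem pairing_bdd {k : ℕ} (N : (Fin k → ℝ) → ℝ)
    (hdef : ∀ v, N v = 0 → v = 0)
    (hsmul : ∀ (a : ℝ) (v : Fin k → ℝ), N (a • v) = |a| * N v)
    (hadd : ∀ v w, N (v + w) ≤ N v + N w)
    (x : Fin k → ℝ) :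
    BddAbove {t : ℝ | ∃ v : Fin k → ℝ, N v ≤ 1 ∧ t = |∑ i, x i * v i|} := by
  have hN0 : N 0 = 0 := by simpa using hsmul 0 0
  let gn : AddGroupNorm (SynVec k) :=
    { toFun := fun v => N v.val
      map_zero' := hN0
      add_le' := fun a b => hadd a.val b.val
      neg' := fun v => by
        have h : N (-v.val) = N v.val := by simpa using hsmul (-1) v.val
        exact h
      eq_zero_of_map_eq_zero' := fun v hv => SynVec.val_injective (hdef v.val hv) }
  letI : NormedAddCommGroup (SynVec k) := gn.toNormedAddCommGroup
  letI : NormedSpace ℝ (SynVec k) :=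
    { norm_smul_le := fun a v => le_of_eq (hsmul a v.val) }
  let φ : (SynVec k) →ₗ[ℝ] ℝ :=
    { toFun := fun v => ∑ i, x i * v.val i
      map_add' := fun a b => by
        show ∑ i, x i * (a.val + b.val) i = _
        simp [mul_add, Finset.sum_add_distrib]
      map_smul' := fun c a => by
        show ∑ i, x i * (c • a.val) i = c * ∑ i, x i * a.val i
        simp [Finset.mul_sum]; ring_nf
        exact Finset.sum_congr rfl fun i _ => by ring }
  let φc : (SynVec k) →L[ℝ] ℝ := LinearMap.toContinuousLinearMap φ
  refine ⟨‖φc‖, ?_⟩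
  rintro t ⟨v, hv, rfl⟩
  have h2 : ‖φc ⟨v⟩‖ ≤ ‖φc‖ * ‖(⟨v⟩ : SynVec k)‖ := φc.le_opNorm _
  have h1 : ‖φc ⟨v⟩‖ = |∑ i, x i * v i| := rfl
  have h3 : ‖(⟨v⟩ : SynVec k)‖ = N v := rfl
  calc |∑ i, x i * v i| ≤ ‖φc‖ * N v := by rw [← h1, ← h3]; exact h2
    _ ≤ ‖φc‖ * 1 := mul_le_mul_of_nonneg_left hv (norm_nonneg _)
    _ = ‖φc‖ := mul_one _

/-- The dual norm of a norm `N` on `ℝ^k`. -/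
noncomputable def dualNorm {k : ℕ} (N : (Fin k → ℝ) → ℝ) (x : Fin k → ℝ) : ℝ :=
  sSup {t : ℝ | ∃ v : Fin k → ℝ, N v ≤ 1 ∧ t = |∑ i, x i * v i|}

theorem zero_mem_dualSet {k : ℕ} (N : (Fin k → ℝ) → ℝ)
    (hsmul : ∀ (a : ℝ) (v : Fin k → ℝ), N (a • v) = |a| * N v) (x : Fin k → ℝ) :
    (0 : ℝ) ∈ {t : ℝ | ∃ v : Fin k → ℝ, N v ≤ 1 ∧ t = |∑ i, x i * v i|} := by
  have hN0 : N 0 = 0 := by simpa using hsmul 0 0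
  exact ⟨0, by rw [hN0]; norm_num, by simp⟩

theorem dualNorm_nonneg {k : ℕ} (N : (Fin k → ℝ) → ℝ)
    (hdef : ∀ v, N v = 0 → v = 0)
    (hsmul : ∀ (a : ℝ) (v : Fin k → ℝ), N (a • v) = |a| * N v)
    (hadd : ∀ v w, N (v + w) ≤ N v + N w)
    (x : Fin k → ℝ) : 0 ≤ dualNorm N x :=
  le_csSup (pairing_bdd N hdef hsmul hadd x) (zero_mem_dualSet N hsmul x)

theorem pairing_le {k : ℕ} (N : (Fin k → ℝ) → ℝ)
    (hnn : ∀ v, 0 ≤ N v)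
    (hdef : ∀ v, N v = 0 → v = 0)
    (hsmul : ∀ (a : ℝ) (v : Fin k → ℝ), N (a • v) = |a| * N v)
    (hadd : ∀ v w, N (v + w) ≤ N v + N w)
    (x w : Fin k → ℝ) : |∑ i, x i * w i| ≤ dualNorm N x * N w := by
  rcases eq_or_lt_of_le (hnn w) with h0 | hpos
  · have hw : w = 0 := hdef w h0.symm
    subst hw
    simp only [Pi.zero_apply, mul_zero, Finset.sum_const_zero, abs_zero]
    have hN0 : N (0 : Fin k → ℝ) = 0 := by simpa using hsmul 0 0
    rw [hN0, mul_zero]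
  · have hmem : ((N w)⁻¹ * |∑ i, x i * w i|) ∈
        {t : ℝ | ∃ v : Fin k → ℝ, N v ≤ 1 ∧ t = |∑ i, x i * v i|} := by
      refine ⟨(N w)⁻¹ • w, ?_, ?_⟩
      · rw [hsmul, abs_of_nonneg (inv_nonneg.2 (hnn w)), inv_mul_cancel₀ (ne_of_gt hpos)]
      · rw [← abs_of_nonneg (inv_nonneg.2 (hnn w)), ← abs_mul, Finset.mul_sum]
        congr 1
        exact Finset.sum_congr rfl fun i _ => by
          simp only [Pi.smul_apply, smul_eq_mul, abs_of_nonneg (inv_nonneg.2 (hnn w))]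
          ring
    have := le_csSup (pairing_bdd N hdef hsmul hadd x) hmem
    have h2 : (N w)⁻¹ * |∑ i, x i * w i| ≤ dualNorm N x := this
    calc |∑ i, x i * w i| = N w * ((N w)⁻¹ * |∑ i, x i * w i|) := by
          field_simp
      _ ≤ N w * dualNorm N x := mul_le_mul_of_nonneg_left h2 (hnn w)
      _ = dualNorm N x * N w := mul_comm _ _

/-- Lemma (growth factor bound): for a bilinear map `β` given by an HM representation
`(L, R, P)`, i.e. `β(u,v) = Σᵢ P_{·,i}(L_{i,·}·u)(R_{i,·}·v)`, and norms
`Np` (a p-norm on the output) and `Nqe, Nqf` (a q-norm on the inputs), with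
`γ := Np ((Σᵢ ‖L_{i,·}‖_q* ‖R_{i,·}‖_q* |p_{j,i}|)_j)`, one has
`Np (β(u,v)) ≤ γ · Nq u · Nq v`. -/
theorem growthFactor_bound {r e f g : ℕ}
    (Np : (Fin g → ℝ) → ℝ) (Nqe : (Fin e → ℝ) → ℝ) (Nqf : (Fin f → ℝ) → ℝ)
    (hNp_nonneg : ∀ v, 0 ≤ Np v)
    (hNp_def : ∀ v, Np v = 0 → v = 0)
    (hNp_smul : ∀ (a : ℝ) (v : Fin g → ℝ), Np (a • v) = |a| * Np v)
    (hNp_add : ∀ v w, Np (v + w) ≤ Np v + Np w)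
    (hNp_mono : ∀ v w : Fin g → ℝ, (∀ j, |v j| ≤ |w j|) → Np v ≤ Np w)
    (hNqe_nonneg : ∀ v, 0 ≤ Nqe v)
    (hNqe_def : ∀ v, Nqe v = 0 → v = 0)
    (hNqe_smul : ∀ (a : ℝ) (v : Fin e → ℝ), Nqe (a • v) = |a| * Nqe v)
    (hNqe_add : ∀ v w, Nqe (v + w) ≤ Nqe v + Nqe w)
    (hNqf_nonneg : ∀ v, 0 ≤ Nqf v)
    (hNqf_def : ∀ v, Nqf v = 0 → v = 0)
    (hNqf_smul : ∀ (a : ℝ) (v : Fin f → ℝ), Nqf (a • v) = |a| * Nqf v)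
    (hNqf_add : ∀ v w, Nqf (v + w) ≤ Nqf v + Nqf w)
    (L : Matrix (Fin r) (Fin e) ℝ) (R : Matrix (Fin r) (Fin f) ℝ)
    (P : Matrix (Fin g) (Fin r) ℝ) (u : Fin e → ℝ) (v : Fin f → ℝ) :
    Np (fun j => ∑ i, P j i * ((∑ a, L i a * u a) * (∑ b, R i b * v b))) ≤
      Np (fun j => ∑ i, dualNorm Nqe (L i) * dualNorm Nqf (R i) * |P j i|) *
        (Nqe u * Nqf v) := by
  set Dl : Fin r → ℝ := fun i => dualNorm Nqe (L i) with hDl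
  set Dr : Fin r → ℝ := fun i => dualNorm Nqf (R i) with hDr
  set y : Fin g → ℝ := fun j => ∑ i, Dl i * Dr i * |P j i| with hy
  set c : ℝ := Nqe u * Nqf v with hc
  have hc_nonneg : 0 ≤ c := mul_nonneg (hNqe_nonneg u) (hNqf_nonneg v)
  have hDl_nonneg : ∀ i, 0 ≤ Dl i := fun i =>
    dualNorm_nonneg Nqe hNqe_def hNqe_smul hNqe_add (L i)
  have hDr_nonneg : ∀ i, 0 ≤ Dr i := fun i =>
    dualNorm_nonneg Nqf hNqf_def hNqf_smul hNqf_add (R i)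
  have hy_nonneg : ∀ j, 0 ≤ y j := fun j =>
    Finset.sum_nonneg fun i _ =>
      mul_nonneg (mul_nonneg (hDl_nonneg i) (hDr_nonneg i)) (abs_nonneg _)
  have hA : ∀ i, |∑ a, L i a * u a| ≤ Dl i * Nqe u := fun i =>
    pairing_le Nqe hNqe_nonneg hNqe_def hNqe_smul hNqe_add (L i) u
  have hB : ∀ i, |∑ b, R i b * v b| ≤ Dr i * Nqf v := fun i =>
    pairing_le Nqf hNqf_nonneg hNqf_def hNqf_smul hNqf_add (R i) v
  have key : Np (fun j => ∑ i, P j i * ((∑ a, L i a * u a) * (∑ b, R i b * v b))) ≤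
      Np (c • y) := by
    apply hNp_mono
    intro j
    have h1 : |∑ i, P j i * ((∑ a, L i a * u a) * (∑ b, R i b * v b))| ≤
        ∑ i, |P j i| * ((Dl i * Nqe u) * (Dr i * Nqf v)) := by
      calc |∑ i, P j i * ((∑ a, L i a * u a) * (∑ b, R i b * v b))| ≤
          ∑ i, |P j i * ((∑ a, L i a * u a) * (∑ b, R i b * v b))| :=
            Finset.abs_sum_le_sum_abs _ _
        _ ≤ ∑ i, |P j i| * ((Dl i * Nqe u) * (Dr i * Nqf v)) := by
            apply Finset.sum_le_sum
            intro i _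
            rw [abs_mul, abs_mul]
            apply mul_le_mul_of_nonneg_left _ (abs_nonneg _)
            exact mul_le_mul (hA i) (hB i) (abs_nonneg _)
              (le_trans (abs_nonneg _) (hA i))
    have h2 : ∑ i, |P j i| * ((Dl i * Nqe u) * (Dr i * Nqf v)) = c * y j := by
      rw [hy, Finset.mul_sum]
      exact Finset.sum_congr rfl fun i _ => by rw [hc]; ring
    have h3 : |(c • y) j| = c * y j := by
      rw [Pi.smul_apply, smul_eq_mul, abs_of_nonneg (mul_nonneg hc_nonneg (hy_nonneg j))]
    rw [h3]
    calc |∑ i, P j i * ((∑ a, L i a * u a) * (∑ b, R i b * v b))| ≤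
        ∑ i, |P j i| * ((Dl i * Nqe u) * (Dr i * Nqf v)) := h1
      _ = c * y j := h2
  calc Np (fun j => ∑ i, P j i * ((∑ a, L i a * u a) * (∑ b, R i b * v b))) ≤
      Np (c • y) := key
    _ = |c| * Np y := hNp_smul c y
    _ = Np y * (Nqe u * Nqf v) := by
        rw [abs_of_nonneg hc_nonneg, hc]; ring
end

section
/- The relaxed growth factor γ₂ of Strassen's original algorithm, defined as Σ_{i=1}^7 ‖L_i‖₂·‖R_i‖₂·‖P_i‖₂ where L_i, R_i, P_i are the i-th rank-one factors (as rows of the HM representation, with Euclidean norms), equals 12 + 2√2. -/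
open Matrix

/-- The `L` matrix of Strassen's HM representation. -/
def strassenL : Matrix (Fin 7) (Fin 4) ℝ :=
  !![1,0,0,1; 0,1,0,-1; -1,0,1,0; 1,1,0,0; 1,0,0,0; 0,0,0,1; 0,0,1,1]

/-- The `R` matrix of Strassen's HM representation. -/
def strassenR : Matrix (Fin 7) (Fin 4) ℝ :=
  !![1,0,0,1; 0,0,1,1; 1,1,0,0; 0,0,0,1; 0,1,0,-1; -1,0,1,0; 1,0,0,0]

/-- The `P` matrix of Strassen's HM representation. -/
def strassenP : Matrix (Fin 4) (Fin 7) ℝ :=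
  (!![1,0,0,1; 1,0,0,0; 0,0,0,1; -1,1,0,0; 0,1,0,1; 1,0,1,0; 0,0,1,-1])ᵀ

/-- The relaxed growth factor `γ₂` of Strassen's original algorithm,
`Σ_{i=1}^7 ‖Lᵢ‖₂·‖Rᵢ‖₂·‖Pᵢ‖₂`, equals `12 + 2√2`. -/
theorem strassen_gamma2 :
    (∑ i : Fin 7,
        Real.sqrt (∑ j, (strassenL i j) ^ 2) *
          Real.sqrt (∑ j, (strassenR i j) ^ 2) *
          Real.sqrt (∑ j, (strassenP j i) ^ 2)) = 12 + 2 * Real.sqrt 2 := by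
  have h1 : Real.sqrt 1 = 1 := Real.sqrt_one
  have h2 : Real.sqrt 2 * Real.sqrt 2 = 2 := Real.mul_self_sqrt (by norm_num)
  simp only [Fin.sum_univ_succ, Fin.sum_univ_zero, strassenL, strassenR, strassenP,
    Matrix.transpose_apply, Matrix.cons_val', Matrix.cons_val_zero, Matrix.cons_val_one,
    Matrix.head_cons, Matrix.empty_val', Matrix.cons_val_fin_one, Matrix.head_fin_const,
    Matrix.cons_val_succ, Matrix.of_apply]
  norm_num
  nlinarith [h2, Real.sqrt_nonneg 2]
end
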